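/- Let 4 ≤ p_1 ≤ p_2 and p_3 - p_2 ≥ p_1. Let G* be a graph containing a spanning subgraph H = H_1 ∨ (H_2 ∪ H_3 ∪ H_4) where H_1 ≅ K_{p_1-2}, H_2 ≅ K_{p_2}, H_3 ≅ K_{p_3}, and H_4 is an empty graph on the remaining vertices. Assume K_{p_1} ∪ K_{p_2} ∪ K_{p_3} is not a subgraph of G*, there is a vertex v ∈ V(H_4) with N_{G*}(v) = V(H_1), and for every w' ∉ V(H_1) ∪ {v}, G* + vw' contains a subgraph isomorphic to K_{p_1} ∪ K_{p_2} ∪ K_{p_3}. Then the number of edges of G* with both endpoints outside V(H_1) is at least C(p_2+1, 2) + C(p_3+1, 2). -/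

import Mathlib

open SimpleGraph Finset

/-- `H` is a subgraph of `G` (up to isomorphism): an injective homomorphism exists. -/
def IsSubgraphOf {α β : Type*} (H : SimpleGraph α) (G : SimpleGraph β) : Prop :=
  ∃ f : α → β, Function.Injective f ∧ ∀ a b, H.Adj a b → G.Adj (f a) (f b)

/-- `G` is `H`-saturated. -/
def IsSat {α β : Type*} (G : SimpleGraph α) (H : SimpleGraph β) : Prop :=
  ¬ IsSubgraphOf H G ∧
    ∀ u v : α, u ≠ v → ¬ G.Adj u v →
      IsSubgraphOf H (G ⊔ SimpleGraph.fromEdgeSet {s(u, v)})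

/-- First position of block `i` (for `2 ≤ i`) in `H(n; p₁, …, p_t)`. -/
def blockStart (p : ℕ → ℕ) (i : ℕ) : ℕ :=
  (p 1 - 2) + ∑ j ∈ Finset.Ico 2 i, (p j + 1)

def inBlock (p : ℕ → ℕ) (i : ℕ) (a : ℕ) : Prop :=
  blockStart p i ≤ a ∧ a < blockStart p i + (p i + 1)

/-- `H(n; p₁, …, p_t) = K_{p₁-2} ∨ (K_{p₂+1} ∪ ⋯ ∪ K_{p_t+1} ∪ I_m)`. -/
def Hgraph (n t : ℕ) (p : ℕ → ℕ) : SimpleGraph (Fin n) :=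
  SimpleGraph.fromRel (fun u v =>
    (u : ℕ) < p 1 - 2 ∨ ∃ i, 2 ≤ i ∧ i ≤ t ∧ inBlock p i (u : ℕ) ∧ inBlock p i (v : ℕ))

/-- The disjoint union `K_{p₁} ∪ K_{p₂} ∪ ⋯ ∪ K_{p_t}`. -/
def cliqueUnion (t : ℕ) (p : ℕ → ℕ) :
    SimpleGraph (Σ i : Fin t, Fin (p ((i : ℕ) + 1))) where
  Adj a b := a ≠ b ∧ a.1 = b.1
  symm := ⟨fun a b h => ⟨h.1.symm, h.2.symm⟩⟩
  loopless := ⟨fun a h => h.1 rfl⟩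

/-- The disjoint union `K_{p₂} ∪ ⋯ ∪ K_{p_t}`. -/
def cliqueUnionTail (t : ℕ) (p : ℕ → ℕ) :
    SimpleGraph (Σ i : Fin (t - 1), Fin (p ((i : ℕ) + 2))) where
  Adj a b := a ≠ b ∧ a.1 = b.1
  symm := ⟨fun a b h => ⟨h.1.symm, h.2.symm⟩⟩
  loopless := ⟨fun a h => h.1 rfl⟩

/-!
Delete `S1`. In the remaining graph `v` is isolated, and saturation gives, for every vertex `w`,
disjoint cliques `K_{p₂}` and `K_{p₃}` avoiding `w`: a copy of `K_{p₁} ∪ K_{p₂} ∪ K_{p₃}` in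
`G* + vw` must use the edge `vw`, the clique through it lies in `S1 ∪ {v, w}` and so is the
`K_{p₁}` filling this set, and the other two cliques avoid it.

Counting the edges of a few such cliques by inclusion–exclusion (`C(|K|, 2)` edges per clique,
at most `C(|K ∩ L|, 2)` shared by two) proves the bound as soon as the cliques overlap little.
Large overlaps are rigid: if `k`-cliques `K₁`, `K₂` avoid distinct vertices `u`, `z` of a
`k`-clique `K` and any two of `K, K₁, K₂` share `k - 1` vertices, then `K₁ = K - u + x`,
`K₂ = K - z + x`, so `u ~ x` and `K + x` is a `(k+1)`-clique. Applied to `p₃`-cliques this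
gives a `K_{p₃+1}` `X`; then every `p₂`-clique of a pair meets `X` in at most one vertex unless
the count already succeeds, and the same argument on `p₂`-cliques gives a `K_{p₂+1}` meeting `X`
in at most one vertex, which together with `X` has enough edges.
-/

theorem Nat.choose_two_add_choose_two_le_choose_two_add (k t : ℕ) :
    k.choose 2 + t.choose 2 ≤ (k + t).choose 2 := by
  qify [Nat.cast_choose_two]
  nlinarith [mul_nonneg (Nat.cast_nonneg (α := ℚ) k) (Nat.cast_nonneg (α := ℚ) t)]

/-- Convexity of `C(·, 2)`: `(k, t)` is majorized by `(K, k + t - K)`. -/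
theorem Nat.choose_two_add_choose_two_le {k t K s : ℕ} (hk : k ≤ K) (ht : t ≤ K)
    (hs : k + t ≤ K + s) : k.choose 2 + t.choose 2 ≤ K.choose 2 + s.choose 2 := by
  rcases le_total (k + t) K with h | h
  · have := Nat.choose_le_choose 2 h
    have := Nat.choose_two_add_choose_two_le_choose_two_add k t
    omega
  obtain ⟨m, hm⟩ : ∃ m, k + t = K + m := ⟨k + t - K, by omega⟩
  have hms := Nat.choose_le_choose 2 (show m ≤ s by omega)
  suffices k.choose 2 + t.choose 2 ≤ K.choose 2 + m.choose 2 by omega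
  have hkt : (k : ℚ) + t = K + m := by exact_mod_cast hm
  qify [Nat.cast_choose_two]
  nlinarith [mul_nonneg (sub_nonneg.2 (show (k : ℚ) ≤ K by exact_mod_cast hk))
    (sub_nonneg.2 (show (t : ℚ) ≤ K by exact_mod_cast ht))]

theorem Nat.choose_two_succ (n : ℕ) : (n + 1).choose 2 = n.choose 2 + n := by
  rw [Nat.choose_succ_succ', Nat.choose_one_right, add_comm]

namespace Finset
variable {α : Type*} [DecidableEq α]

theorem mk_mem_image_offDiag {s : Finset α} {x y : α} :
    s(x, y) ∈ s.offDiag.image Sym2.mk.uncurry ↔ x ∈ s ∧ y ∈ s ∧ x ≠ y := by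
  simp only [mem_image, mem_offDiag, Prod.exists, Function.uncurry_apply_pair, Sym2.eq_iff]
  constructor
  · rintro ⟨a, b, ⟨ha, hb, hab⟩, ⟨rfl, rfl⟩ | ⟨rfl, rfl⟩⟩
    · exact ⟨ha, hb, hab⟩
    · exact ⟨hb, ha, Ne.symm hab⟩
  · rintro ⟨hx, hy, hxy⟩
    exact ⟨x, y, ⟨hx, hy, hxy⟩, .inl ⟨rfl, rfl⟩⟩

theorem card_inter_image_offDiag_le (s t : Finset α) :
    #(s.offDiag.image Sym2.mk.uncurry ∩ t.offDiag.image Sym2.mk.uncurry) ≤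
      (#(s ∩ t)).choose 2 := by
  rw [← Sym2.card_image_offDiag]
  refine card_le_card fun e he => ?_
  induction e using Sym2.ind with
  | _ x y =>
    simp only [mem_inter, mk_mem_image_offDiag] at he ⊢
    tauto

theorem card_add_card_add_card_add_card_le (A B C D : Finset α) :
    #A + #B + #C + #D ≤ #(A ∪ B ∪ C ∪ D) +
      (#(A ∩ B) + #(A ∩ C) + #(A ∩ D) + #(B ∩ C) + #(B ∩ D) + #(C ∩ D)) := by
  have h₁ := card_union_add_card_inter A B
  have h₂ := card_union_add_card_inter (A ∪ B) C
  have h₃ := card_union_add_card_inter (A ∪ B ∪ C) D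
  have h₄ : #((A ∪ B) ∩ C) ≤ #(A ∩ C) + #(B ∩ C) := by
    rw [union_inter_distrib_right]; exact card_union_le _ _
  have h₅ : #((A ∪ B ∪ C) ∩ D) ≤ #(A ∩ D) + #(B ∩ D) + #(C ∩ D) := by
    rw [union_inter_distrib_right, union_inter_distrib_right]
    exact (card_union_le _ _).trans (Nat.add_le_add_right (card_union_le _ _) _)
  omega

theorem card_inter_add_card_inter_le {s t : Finset α} (h : Disjoint s t)
    (u : Finset α) : #(s ∩ u) + #(t ∩ u) ≤ #u := by
  rw [← card_union_of_disjoint (h.mono inter_subset_left inter_subset_left),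
    ← union_inter_distrib_right]
  exact card_le_card inter_subset_right

theorem exists_eq_insert_erase_of_card_inter {K K' : Finset α} {u : α}
    (hKK' : #K' = #K) (hu : u ∈ K) (hu' : u ∉ K') (h : #K - 1 ≤ #(K ∩ K')) :
    ∃ x ∉ K, K' = insert x (K.erase u) := by
  have hsub : K ∩ K' ⊆ K.erase u := fun y hy =>
    mem_erase.2 ⟨fun hyu => hu' (hyu ▸ (mem_inter.1 hy).2), (mem_inter.1 hy).1⟩
  have hinter : K' ∩ K = K.erase u := by
    rw [inter_comm]
    exact eq_of_subset_of_card_le hsub (by rw [card_erase_of_mem hu]; exact h)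
  obtain ⟨x, hx⟩ : ∃ x, K' \ K = {x} := by
    rw [← card_eq_one]
    have := card_sdiff_add_card_inter K' K
    rw [hinter, card_erase_of_mem hu] at this
    have := card_pos.2 ⟨u, hu⟩
    omega
  refine ⟨x, (mem_sdiff.1 (hx ▸ mem_singleton_self x)).2, ?_⟩
  rw [← sdiff_union_inter K' K, hx, hinter, insert_eq]

end Finset

namespace SimpleGraph
variable {W : Type*} (G : SimpleGraph W)

def HasCliquePairAvoiding (a b : ℕ) (w : W) : Prop :=
  ∃ A B : Finset W, G.IsNClique a A ∧ G.IsNClique b B ∧ Disjoint A B ∧ w ∉ A ∧ w ∉ B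

variable [DecidableEq W]

theorem IsClique.image_offDiag_subset_edgeSet {K : Finset W} (hK : G.IsClique (K : Set W)) :
    ↑(K.offDiag.image Sym2.mk.uncurry) ⊆ G.edgeSet := by
  intro e he
  induction e using Sym2.ind with
  | _ x y =>
    obtain ⟨hx, hy, hxy⟩ := mk_mem_image_offDiag.1 he
    exact hK hx hy hxy

theorem sum_choose_two_le_ncard_edgeSet [Finite W] {K₁ K₂ K₃ K₄ : Finset W}
    (h₁ : G.IsClique (K₁ : Set W)) (h₂ : G.IsClique (K₂ : Set W))
    (h₃ : G.IsClique (K₃ : Set W)) (h₄ : G.IsClique (K₄ : Set W)) :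
    (#K₁).choose 2 + (#K₂).choose 2 + (#K₃).choose 2 + (#K₄).choose 2 ≤ G.edgeSet.ncard +
      ((#(K₁ ∩ K₂)).choose 2 + (#(K₁ ∩ K₃)).choose 2 + (#(K₁ ∩ K₄)).choose 2 +
        (#(K₂ ∩ K₃)).choose 2 + (#(K₂ ∩ K₄)).choose 2 + (#(K₃ ∩ K₄)).choose 2) := by
  set E : Finset W → Finset (Sym2 W) := fun K => K.offDiag.image Sym2.mk.uncurry
  have hunion : #(E K₁ ∪ E K₂ ∪ E K₃ ∪ E K₄) ≤ G.edgeSet.ncard := by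
    rw [← Set.ncard_coe_finset]
    refine Set.ncard_le_ncard ?_ (Set.toFinite _)
    simp only [coe_union, Set.union_subset_iff]
    exact ⟨⟨⟨h₁.image_offDiag_subset_edgeSet, h₂.image_offDiag_subset_edgeSet⟩,
      h₃.image_offDiag_subset_edgeSet⟩, h₄.image_offDiag_subset_edgeSet⟩
  have := card_add_card_add_card_add_card_le (E K₁) (E K₂) (E K₃) (E K₄)
  simp only [E, Sym2.card_image_offDiag] at this hunion
  have := card_inter_image_offDiag_le K₁ K₂
  have := card_inter_image_offDiag_le K₁ K₃
  have := card_inter_image_offDiag_le K₁ K₄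
  have := card_inter_image_offDiag_le K₂ K₃
  have := card_inter_image_offDiag_le K₂ K₄
  have := card_inter_image_offDiag_le K₃ K₄
  omega

variable {G} in
theorem IsNClique.card_inter_le_or_insert {k : ℕ} {K K₁ K₂ : Finset W} {u z : W}
    (hK : G.IsNClique k K) (hK₁ : G.IsNClique k K₁) (hK₂ : G.IsNClique k K₂)
    (hu : u ∈ K) (hz : z ∈ K) (huz : u ≠ z) (hu₁ : u ∉ K₁) (hz₂ : z ∉ K₂) :
    #(K ∩ K₁) ≤ k - 2 ∨ #(K ∩ K₂) ≤ k - 2 ∨ #(K₁ ∩ K₂) ≤ k - 2 ∨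
      G.IsNClique (k + 1) (insert u K₁) := by
  by_contra! h
  obtain ⟨h₁, h₂, h₁₂, hnot⟩ := h
  obtain ⟨x, hxK, rfl⟩ := exists_eq_insert_erase_of_card_inter
    (hK₁.card_eq.trans hK.card_eq.symm) hu hu₁ (by rw [hK.card_eq]; omega)
  obtain ⟨y, hyK, rfl⟩ := exists_eq_insert_erase_of_card_inter
    (hK₂.card_eq.trans hK.card_eq.symm) hz hz₂ (by rw [hK.card_eq]; omega)
  have hxK₂ : x ∈ insert y (K.erase z) := by
    by_contra hx
    have hsub : insert x (K.erase u) ∩ insert y (K.erase z) ⊆ (K.erase u).erase z := by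
      intro w hw
      simp only [mem_inter, mem_insert, mem_erase] at hw ⊢
      grind
    have := card_le_card hsub
    rw [card_erase_of_mem (mem_erase.2 ⟨huz.symm, hz⟩), card_erase_of_mem hu,
      hK.card_eq] at this
    omega
  have hux : G.Adj u x := hK₂.isClique (by simp [hu, huz]) hxK₂ (by rintro rfl; exact hxK hu)
  apply hnot
  rw [insert_comm, insert_erase hu]
  refine ⟨?_, by rw [card_insert_of_notMem hxK, hK.card_eq]⟩
  rw [coe_insert, isClique_insert]
  refine ⟨hK.isClique, fun w hw hxw => ?_⟩
  by_cases hwu : w = u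
  · exact hwu ▸ hux.symm
  · exact hK₁.isClique (mem_insert_self x _) (by simp [hwu, hw]) hxw

section EdgeBounds
variable [Finite W] {a b : ℕ}

theorem le_ncard_edgeSet_of_cliquePairs (hab : a + 4 ≤ b) {A₁ B₁ A₂ B₂ : Finset W}
    (hA₁ : G.IsNClique a A₁) (hB₁ : G.IsNClique b B₁) (hAB₁ : Disjoint A₁ B₁)
    (hA₂ : G.IsNClique a A₂) (hB₂ : G.IsNClique b B₂) (hAB₂ : Disjoint A₂ B₂)
    (hB₁₂ : #(B₁ ∩ B₂) ≤ b - 2) :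
    (a + 1).choose 2 + (b + 1).choose 2 ≤ G.edgeSet.ncard := by
  have hcount := G.sum_choose_two_le_ncard_edgeSet hA₁.isClique hB₁.isClique hA₂.isClique
    hB₂.isClique
  rw [hA₁.card_eq, hB₁.card_eq, hA₂.card_eq, hB₂.card_eq, disjoint_iff_inter_eq_empty.1 hAB₁,
    disjoint_iff_inter_eq_empty.1 hAB₂] at hcount
  have hoverlapA : (#(A₁ ∩ A₂)).choose 2 + (#(B₁ ∩ A₂)).choose 2 ≤ a.choose 2 := by
    have := card_inter_add_card_inter_le hAB₁ A₂
    rw [hA₂.card_eq] at this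
    exact (Nat.choose_two_add_choose_two_le_choose_two_add _ _).trans
      (Nat.choose_le_choose 2 this)
  have hoverlapB : (#(B₁ ∩ B₂)).choose 2 + (#(A₁ ∩ B₂)).choose 2 ≤ (b - 2).choose 2 + 1 := by
    have h₁ := card_inter_add_card_inter_le hAB₁.symm B₂
    have h₂ := card_le_card (inter_subset_left : A₁ ∩ B₂ ⊆ A₁)
    rw [hB₂.card_eq] at h₁
    rw [hA₁.card_eq] at h₂
    exact Nat.choose_two_add_choose_two_le (s := 2) hB₁₂ (by omega) (by omega)
  -- the overlaps cost at most `C(a, 2) + C(b - 2, 2) + 1`; `C(b, 2) - C(b - 2, 2) - 1 ≥ a + b`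
  obtain ⟨c, rfl⟩ : ∃ c, b = c + 2 := ⟨b - 2, by omega⟩
  have := Nat.choose_two_succ a
  have := Nat.choose_two_succ c
  have : (c + 2).choose 2 = (c + 1).choose 2 + (c + 1) := Nat.choose_two_succ (c + 1)
  have := Nat.choose_two_succ (c + 2)
  simp only [Nat.add_sub_cancel, card_empty, Nat.choose_zero_succ] at hcount hoverlapB
  omega

theorem le_ncard_edgeSet_of_succ_clique_of_cliquePair (hab : a + 2 ≤ b) {X A B : Finset W}
    (hX : G.IsNClique (b + 1) X) (hA : G.IsNClique a A) (hB : G.IsNClique b B)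
    (hAB : Disjoint A B) (hBX : #(B ∩ X) ≤ b - 1) :
    (a + 1).choose 2 + (b + 1).choose 2 ≤ G.edgeSet.ncard := by
  have hcount := G.sum_choose_two_le_ncard_edgeSet hA.isClique hB.isClique hX.isClique
    (K₄ := ∅) (by simp)
  rw [hA.card_eq, hB.card_eq, hX.card_eq, disjoint_iff_inter_eq_empty.1 hAB] at hcount
  have hmaj : (#(A ∩ X)).choose 2 + (#(B ∩ X)).choose 2 ≤ (b - 1).choose 2 + 1 := by
    have h₁ := card_inter_add_card_inter_le hAB X
    have h₂ := card_le_card (inter_subset_left : A ∩ X ⊆ A)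
    rw [hX.card_eq] at h₁
    rw [hA.card_eq] at h₂
    exact Nat.choose_two_add_choose_two_le (s := 2) (by omega) hBX (by omega)
  obtain ⟨c, rfl⟩ : ∃ c, b = c + 1 := ⟨b - 1, by omega⟩
  have := Nat.choose_two_succ a
  have := Nat.choose_two_succ c
  have := Nat.choose_two_succ (c + 1)
  simp only [Nat.add_sub_cancel, inter_empty, card_empty, Nat.choose_zero_succ] at hcount hmaj
  omega

theorem le_ncard_edgeSet_of_succ_clique_of_cliques (ha : 3 ≤ a) {X A A' : Finset W}
    (hX : G.IsNClique (b + 1) X) (hA : G.IsNClique a A) (hA' : G.IsNClique a A')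
    (hAX : #(A ∩ X) ≤ 1) (hA'X : #(A' ∩ X) ≤ 1) (hAA' : #(A ∩ A') ≤ a - 2) :
    (a + 1).choose 2 + (b + 1).choose 2 ≤ G.edgeSet.ncard := by
  have hcount := G.sum_choose_two_le_ncard_edgeSet hA.isClique hA'.isClique hX.isClique
    (K₄ := ∅) (by simp)
  rw [hA.card_eq, hA'.card_eq, hX.card_eq, Nat.choose_eq_zero_of_lt (by omega : #(A ∩ X) < 2),
    Nat.choose_eq_zero_of_lt (by omega : #(A' ∩ X) < 2)] at hcount
  have hAA'₂ := Nat.choose_le_choose 2 hAA'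
  obtain ⟨c, rfl⟩ : ∃ c, a = c + 2 := ⟨a - 2, by omega⟩
  have := Nat.choose_two_succ c
  have : (c + 2).choose 2 = (c + 1).choose 2 + (c + 1) := Nat.choose_two_succ (c + 1)
  have := Nat.choose_two_succ (c + 2)
  simp only [Nat.add_sub_cancel, inter_empty, card_empty, Nat.choose_zero_succ] at hcount hAA'₂
  omega

theorem le_ncard_edgeSet_of_succ_cliques {X Y : Finset W} (hX : G.IsNClique (b + 1) X)
    (hY : G.IsNClique (a + 1) Y) (hXY : #(Y ∩ X) ≤ 1) :
    (a + 1).choose 2 + (b + 1).choose 2 ≤ G.edgeSet.ncard := by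
  have hcount := G.sum_choose_two_le_ncard_edgeSet hY.isClique hX.isClique
    (K₃ := ∅) (K₄ := ∅) (by simp) (by simp)
  rw [hY.card_eq, hX.card_eq, Nat.choose_eq_zero_of_lt (by omega : #(Y ∩ X) < 2)] at hcount
  simpa using hcount

end EdgeBounds

section CliquePairs
variable [Finite W] {a b : ℕ}

theorem exists_isNClique_succ_or_le (hab : a + 4 ≤ b) [Nonempty W]
    (h : ∀ w, G.HasCliquePairAvoiding a b w) :
    (a + 1).choose 2 + (b + 1).choose 2 ≤ G.edgeSet.ncard ∨ ∃ X, G.IsNClique (b + 1) X := by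
  obtain ⟨A, B, hA, hB, hAB, -, -⟩ := h (Classical.arbitrary W)
  obtain ⟨u, hu, z, hz, huz⟩ := one_lt_card.1 (show 1 < #B by rw [hB.card_eq]; omega)
  obtain ⟨A₁, B₁, hA₁, hB₁, hAB₁, -, hu₁⟩ := h u
  obtain ⟨A₂, B₂, hA₂, hB₂, hAB₂, -, hz₂⟩ := h z
  rcases hB.card_inter_le_or_insert hB₁ hB₂ hu hz huz hu₁ hz₂ with h₁ | h₂ | h₁₂ | hX
  · exact .inl (G.le_ncard_edgeSet_of_cliquePairs hab hA hB hAB hA₁ hB₁ hAB₁ h₁)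
  · exact .inl (G.le_ncard_edgeSet_of_cliquePairs hab hA hB hAB hA₂ hB₂ hAB₂ h₂)
  · exact .inl (G.le_ncard_edgeSet_of_cliquePairs hab hA₁ hB₁ hAB₁ hA₂ hB₂ hAB₂ h₁₂)
  · exact .inr ⟨_, hX⟩

theorem le_ncard_edgeSet_of_isNClique_succ (ha : 3 ≤ a) (hab : a + 2 ≤ b) [Nonempty W]
    (h : ∀ w, G.HasCliquePairAvoiding a b w) {X : Finset W} (hX : G.IsNClique (b + 1) X) :
    (a + 1).choose 2 + (b + 1).choose 2 ≤ G.edgeSet.ncard := by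
  by_contra hT
  have hgood : ∀ w, ∃ A, G.IsNClique a A ∧ w ∉ A ∧ #(A ∩ X) ≤ 1 := by
    intro w
    obtain ⟨A, B, hA, hB, hAB, hwA, -⟩ := h w
    have hBX : b - 1 < #(B ∩ X) := lt_of_not_ge fun hBX =>
      hT (G.le_ncard_edgeSet_of_succ_clique_of_cliquePair hab hX hA hB hAB hBX)
    have := card_inter_add_card_inter_le hAB X
    rw [hX.card_eq] at this
    exact ⟨A, hA, hwA, by omega⟩
  obtain ⟨A, hA, -, hAX⟩ := hgood (Classical.arbitrary W)
  obtain ⟨u, hu, huX⟩ : ∃ u ∈ A, u ∉ X := by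
    by_contra! hAX'
    rw [inter_eq_left.2 hAX', hA.card_eq] at hAX
    omega
  obtain ⟨z, hz, hzu⟩ := exists_mem_ne (show 1 < #A by rw [hA.card_eq]; omega) u
  obtain ⟨A₁, hA₁, hu₁, hA₁X⟩ := hgood u
  obtain ⟨A₂, hA₂, hz₂, hA₂X⟩ := hgood z
  rcases hA.card_inter_le_or_insert hA₁ hA₂ hu hz hzu.symm hu₁ hz₂ with h₁ | h₂ | h₁₂ | hY
  · exact hT (G.le_ncard_edgeSet_of_succ_clique_of_cliques ha hX hA hA₁ hAX hA₁X h₁)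
  · exact hT (G.le_ncard_edgeSet_of_succ_clique_of_cliques ha hX hA hA₂ hAX hA₂X h₂)
  · exact hT (G.le_ncard_edgeSet_of_succ_clique_of_cliques ha hX hA₁ hA₂ hA₁X hA₂X h₁₂)
  · exact hT (G.le_ncard_edgeSet_of_succ_cliques hX hY (by rwa [insert_inter_of_notMem huX]))

theorem choose_two_add_choose_two_le_ncard_edgeSet (ha : 3 ≤ a) (hab : a + 4 ≤ b)
    [Nonempty W] (h : ∀ w, G.HasCliquePairAvoiding a b w) :
    (a + 1).choose 2 + (b + 1).choose 2 ≤ G.edgeSet.ncard := by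
  obtain hT | ⟨X, hX⟩ := G.exists_isNClique_succ_or_le hab h
  · exact hT
  · exact G.le_ncard_edgeSet_of_isNClique_succ ha (by omega) h hX

end CliquePairs

end SimpleGraph

theorem SimpleGraph.IsClique.sdiff_subset_neighborSet_of_sup_edge {V : Type*}
    {G : SimpleGraph V} {v w : V} {s : Set V} (hs : (G ⊔ edge v w).IsClique s) (hv : v ∈ s) :
    s \ {v, w} ⊆ G.neighborSet v := by
  rintro y ⟨hy, hyvw⟩
  have hvy : v ≠ y := fun h => hyvw (h ▸ Set.mem_insert v _)
  obtain hG | ⟨⟨-, rfl⟩ | ⟨rfl, rfl⟩, -⟩ := (sup_adj ..).1 (hs hv hy hvy) |>.imp_right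
    (edge_adj ..).1
  · exact hG
  · exact absurd (Set.mem_insert_of_mem _ rfl) hyvw
  · exact absurd rfl hvy

section Blocks
variable {V : Type*} [DecidableEq V] {t : ℕ} {p : ℕ → ℕ} {G : SimpleGraph V}
  {f : (Σ i : Fin t, Fin (p (i + 1))) → V}

def blockImage (f : (Σ i : Fin t, Fin (p (i + 1))) → V) (i : Fin t) : Finset V :=
  univ.image fun x => f ⟨i, x⟩

theorem mem_blockImage {i : Fin t} {y : V} : y ∈ blockImage f i ↔ ∃ x, f ⟨i, x⟩ = y := by
  simp [blockImage]

theorem card_blockImage (hf : Function.Injective f) (i : Fin t) :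
    #(blockImage f i) = p (i + 1) := by
  rw [blockImage, card_image_of_injective _ fun x y h => sigma_mk_injective (hf h), card_univ,
    Fintype.card_fin]

theorem disjoint_blockImage (hf : Function.Injective f) {i j : Fin t} (hij : i ≠ j) :
    Disjoint (blockImage f i) (blockImage f j) := by
  refine disjoint_left.2 fun y hi hj => hij ?_
  obtain ⟨x, rfl⟩ := mem_blockImage.1 hi
  obtain ⟨x', hx'⟩ := mem_blockImage.1 hj
  exact congrArg Sigma.fst (hf hx').symm

theorem isClique_blockImage (hfG : ∀ a b, (cliqueUnion t p).Adj a b → G.Adj (f a) (f b))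
    (i : Fin t) : G.IsClique (blockImage f i : Set V) := by
  rintro _ hx _ hy hxy
  obtain ⟨x, rfl⟩ := mem_blockImage.1 hx
  obtain ⟨y, rfl⟩ := mem_blockImage.1 hy
  exact hfG _ _ ⟨fun h => hxy (congrArg f h), rfl⟩

theorem exists_mem_blockImage_of_sup_edge {v w : V}
    (hfree : ¬IsSubgraphOf (cliqueUnion t p) G) (hf : Function.Injective f)
    (hfG : ∀ a b, (cliqueUnion t p).Adj a b → (G ⊔ edge v w).Adj (f a) (f b)) :
    ∃ i, v ∈ blockImage f i ∧ w ∈ blockImage f i := by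
  by_contra! hno
  refine hfree ⟨f, hf, fun a b hab => ?_⟩
  obtain hG | ⟨⟨hav, hbw⟩ | ⟨haw, hbv⟩, -⟩ := (sup_adj ..).1 (hfG a b hab) |>.imp_right
    (edge_adj ..).1
  · exact hG
  · exact absurd (hab.2 ▸ mem_blockImage.2 ⟨b.2, hbw⟩) (hno a.1 (mem_blockImage.2 ⟨a.2, hav⟩))
  · exact absurd (hab.2 ▸ mem_blockImage.2 ⟨a.2, haw⟩) (hno b.1 (mem_blockImage.2 ⟨b.2, hbv⟩))

theorem exists_blockImage_of_sup_edge [Finite V] {S : Set V} {v w : V}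
    (hN : G.neighborSet v = S) (hp : ∀ i : Fin t, S.ncard + 2 ≤ p (i + 1))
    (hfree : ¬IsSubgraphOf (cliqueUnion t p) G) (hf : Function.Injective f)
    (hfG : ∀ a b, (cliqueUnion t p).Adj a b → (G ⊔ edge v w).Adj (f a) (f b)) :
    ∃ j : Fin t, p (j + 1) = S.ncard + 2 ∧ ∀ i ≠ j, G.IsNClique (p (i + 1)) (blockImage f i) ∧
      ∀ x ∈ blockImage f i, x ∉ S ∧ x ≠ v ∧ x ≠ w := by
  obtain ⟨j, hvj, -⟩ := exists_mem_blockImage_of_sup_edge hfree hf hfG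
  set T : Set V := {v, w} ∪ S
  have hjT : ↑(blockImage f j) ⊆ T := by
    rw [← Set.sdiff_subset_iff, ← hN]
    exact (isClique_blockImage hfG j).sdiff_subset_neighborSet_of_sup_edge hvj
  have hT : T.ncard ≤ S.ncard + 2 := (Set.ncard_union_le {v, w} S).trans <| by
    have := (Set.ncard_insert_le v {w}).trans_eq (congrArg (· + 1) (Set.ncard_singleton w))
    omega
  have hjT' := Set.ncard_le_ncard hjT (Set.toFinite T)
  rw [Set.ncard_coe_finset, card_blockImage hf] at hjT'
  have hjeq : ↑(blockImage f j) = T := Set.eq_of_subset_of_ncard_le hjT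
    (by rw [Set.ncard_coe_finset, card_blockImage hf]; exact hT.trans (hp j)) (Set.toFinite T)
  refine ⟨j, le_antisymm (hjT'.trans hT) (hp j), fun i hij => ?_⟩
  have hout : ∀ x ∈ blockImage f i, x ∉ S ∧ x ≠ v ∧ x ≠ w := by
    intro x hx
    have hxT : x ∉ T := fun hxT =>
      disjoint_left.1 (disjoint_blockImage hf hij) hx (by rw [← mem_coe, hjeq]; exact hxT)
    simp only [T, Set.mem_union, Set.mem_insert_iff, Set.mem_singleton_iff, not_or] at hxT
    exact ⟨hxT.2, hxT.1⟩
  refine ⟨⟨?_, card_blockImage hf i⟩, hout⟩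
  have := (isClique_blockImage hfG i).sdiff_of_sup_edge
  rwa [Set.sdiff_singleton_eq_self fun hv => (hout v hv).2.1 rfl] at this

end Blocks

def threeSizes (p1 p2 p3 : ℕ) : ℕ → ℕ := fun i => if i = 1 then p1 else if i = 2 then p2 else p3

theorem exists_cliquePair_of_sup_edge {V : Type*} [DecidableEq V] [Finite V] {p1 p2 p3 : ℕ}
    (hp1 : 2 ≤ p1) (hp12 : p1 ≤ p2) (hp13 : p1 < p3) {G : SimpleGraph V} {S : Set V} {v w : V}
    (hS : S.ncard = p1 - 2) (hN : G.neighborSet v = S)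
    (hfree : ¬IsSubgraphOf (cliqueUnion 3 (threeSizes p1 p2 p3)) G)
    (hsat : IsSubgraphOf (cliqueUnion 3 (threeSizes p1 p2 p3)) (G ⊔ edge v w)) :
    ∃ A B : Finset V, G.IsNClique p2 A ∧ G.IsNClique p3 B ∧ Disjoint A B ∧
      ∀ x ∈ A ∪ B, x ∉ S ∧ x ≠ v ∧ x ≠ w := by
  obtain ⟨f, hf, hfG⟩ := hsat
  obtain ⟨j, hj, hother⟩ := exists_blockImage_of_sup_edge hN
    (fun i => by fin_cases i <;> simp [threeSizes] <;> omega) hfree hf hfG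
  have hpair : ∀ i i', i ≠ j → i' ≠ j → i ≠ i' → ∃ A B : Finset V,
      G.IsNClique (threeSizes p1 p2 p3 (i + 1)) A ∧
      G.IsNClique (threeSizes p1 p2 p3 (i' + 1)) B ∧ Disjoint A B ∧
      ∀ x ∈ A ∪ B, x ∉ S ∧ x ≠ v ∧ x ≠ w := fun i i' hi hi' hii' =>
    ⟨_, _, (hother i hi).1, (hother i' hi').1, disjoint_blockImage hf hii', fun x hx =>
      (mem_union.1 hx).elim ((hother i hi).2 x) ((hother i' hi').2 x)⟩
  fin_cases j
  · simpa [threeSizes] using hpair 1 2 (by decide) (by decide) (by decide)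
  · have : p2 = p1 := by simp [threeSizes] at hj; omega
    simpa [threeSizes, this] using hpair 0 2 (by decide) (by decide) (by decide)
  · simp [threeSizes] at hj
    omega

theorem SimpleGraph.hasCliquePairAvoiding_induce {V : Type*} [DecidableEq V] {G : SimpleGraph V}
    {a b : ℕ} {s : Set V} {A B : Finset V} (hA : G.IsNClique a A) (hB : G.IsNClique b B)
    (hAB : Disjoint A B) (hs : ∀ x ∈ A ∪ B, x ∈ s) {w : s} (hw : ↑w ∉ A ∪ B) :
    (G.induce s).HasCliquePairAvoiding a b w := by
  classical
  have hA' : ∀ x ∈ A, x ∈ s := fun x hx => hs x (mem_union_left B hx)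
  have hB' : ∀ x ∈ B, x ∈ s := fun x hx => hs x (mem_union_right A hx)
  refine ⟨A.subtype (· ∈ s), B.subtype (· ∈ s), ?_, ?_, ?_, ?_, ?_⟩
  · rwa [isNClique_induce_iff, subtype_map_of_mem hA']
  · rwa [isNClique_induce_iff, subtype_map_of_mem hB']
  · exact Finset.disjoint_left.2 fun x hxA hxB =>
      Finset.disjoint_left.1 hAB (mem_subtype.1 hxA) (mem_subtype.1 hxB)
  · exact fun hwA => hw (mem_union_left B (mem_subtype.1 hwA))
  · exact fun hwB => hw (mem_union_right A (mem_subtype.1 hwB))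

theorem claim_three_cliques_general {V : Type*} [Fintype V] (p1 p2 p3 : ℕ)
    (hp1 : 4 ≤ p1) (hp12 : p1 ≤ p2) (hgap : p1 ≤ p3 - p2)
    (Gs : SimpleGraph V) (S1 B2 B3 : Set V)
    (hS1card : S1.ncard = p1 - 2) (hB2card : B2.ncard = p2)
    (hd12 : Disjoint S1 B2)
    (hfree : ¬ IsSubgraphOf
      (cliqueUnion 3 (fun i => if i = 1 then p1 else if i = 2 then p2 else p3)) Gs)
    (v : V) (hv : v ∉ S1 ∪ B2 ∪ B3) (hNv : Gs.neighborSet v = S1)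
    (hsatur : ∀ w', w' ∉ S1 → w' ≠ v →
      IsSubgraphOf
        (cliqueUnion 3 (fun i => if i = 1 then p1 else if i = 2 then p2 else p3))
        (Gs ⊔ SimpleGraph.fromEdgeSet {s(v, w')})) :
    (p2 + 1).choose 2 + (p3 + 1).choose 2 ≤ (Gs.induce S1ᶜ).edgeSet.ncard := by
  classical
  simp only [Set.mem_union, not_or] at hv
  obtain ⟨⟨hvS1, hvB2⟩, -⟩ := hv
  obtain ⟨w₀, hw₀⟩ : B2.Nonempty := Set.nonempty_of_ncard_ne_zero (by omega)
  have hw₀v : w₀ ≠ v := by rintro rfl; exact hvB2 hw₀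
  have hpair : ∀ w ∉ S1, w ≠ v → ∃ A B : Finset V, Gs.IsNClique p2 A ∧ Gs.IsNClique p3 B ∧
      Disjoint A B ∧ ∀ x ∈ A ∪ B, x ∉ S1 ∧ x ≠ v ∧ x ≠ w := fun w hw hwv =>
    exists_cliquePair_of_sup_edge (by omega) hp12 (by omega) hS1card hNv hfree
      (hsatur w hw hwv)
  have hinduce : ∀ w : ↥S1ᶜ, (Gs.induce S1ᶜ).HasCliquePairAvoiding p2 p3 w := by
    intro w
    by_cases hwv : w.1 = v
    · obtain ⟨A, B, hA, hB, hAB, hout⟩ := hpair w₀ (Set.disjoint_right.1 hd12 hw₀) hw₀v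
      exact hasCliquePairAvoiding_induce hA hB hAB (fun x hx => (hout x hx).1)
        fun hw => (hout _ hw).2.1 hwv
    · obtain ⟨A, B, hA, hB, hAB, hout⟩ := hpair w w.2 hwv
      exact hasCliquePairAvoiding_induce hA hB hAB (fun x hx => (hout x hx).1)
        fun hw => (hout _ hw).2.2 rfl
  have : Nonempty ↥S1ᶜ := ⟨⟨v, hvS1⟩⟩
  exact (Gs.induce S1ᶜ).choose_two_add_choose_two_le_ncard_edgeSet (by omega) (by omega) hinduce

/-- Claim 2: the three-clique analogue; the edges outside `V(H₁)` number at
least `C(p₂+1, 2) + C(p₃+1, 2)`. -/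
theorem claim_three_cliques {V : Type*} [Fintype V] (p1 p2 p3 : ℕ)
    (hp1 : 4 ≤ p1) (hp12 : p1 ≤ p2) (hgap : p1 ≤ p3 - p2)
    (Gs : SimpleGraph V) (S1 B2 B3 : Set V)
    (hS1card : S1.ncard = p1 - 2) (hB2card : B2.ncard = p2) (hB3card : B3.ncard = p3)
    (hd12 : Disjoint S1 B2) (hd13 : Disjoint S1 B3) (hd23 : Disjoint B2 B3)
    (hS1clique : ∀ a ∈ S1, ∀ b ∈ S1, a ≠ b → Gs.Adj a b)
    (hB2clique : ∀ a ∈ B2, ∀ b ∈ B2, a ≠ b → Gs.Adj a b)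
    (hB3clique : ∀ a ∈ B3, ∀ b ∈ B3, a ≠ b → Gs.Adj a b)
    (hjoin : ∀ a ∈ S1, ∀ b, b ∉ S1 → Gs.Adj a b)
    (hfree : ¬ IsSubgraphOf
      (cliqueUnion 3 (fun i => if i = 1 then p1 else if i = 2 then p2 else p3)) Gs)
    (v : V) (hv : v ∉ S1 ∪ B2 ∪ B3) (hNv : Gs.neighborSet v = S1)
    (hsatur : ∀ w', w' ∉ S1 → w' ≠ v →
      IsSubgraphOf
        (cliqueUnion 3 (fun i => if i = 1 then p1 else if i = 2 then p2 else p3))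
        (Gs ⊔ SimpleGraph.fromEdgeSet {s(v, w')})) :
    (p2 + 1).choose 2 + (p3 + 1).choose 2 ≤ (Gs.induce S1ᶜ).edgeSet.ncard :=
  claim_three_cliques_general p1 p2 p3 hp1 hp12 hgap Gs S1 B2 B3 hS1card hB2card hd12 hfree v hv hNv
    hsatur
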